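/- Let P be a bounded Voronoi cell in a packing of unit balls in ℝ^d and let F_{d−i} ⊂ F_{d−i+1} ⊂ … ⊂ F_{d−1} be a subflag of faces of P (dim F_j = j) with R(F_{d−i}) < √2, where 1 ≤ i ≤ d. Then r_1, …, r_i are linearly independent, conv{o, r_1, …, r_i} is an i-dimensional orthoscheme, and for each 1 ≤ j ≤ i the point r_j lies in the relative interior of F_{d−j} and is the orthogonal projection of o onto the affine hull of F_{d−j}. -/

import Mathlib

open MeasureTheory Metric

noncomputable section

/-- The Voronoi cell of the unit ball centered at the origin, with respect to the set `C`
of centers of a unit ball packing. -/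
def VoronoiCell {d : ℕ} (C : Set (EuclideanSpace ℝ (Fin d))) :
    Set (EuclideanSpace ℝ (Fin d)) :=
  {x | ∀ c ∈ C, ‖x‖ ≤ ‖x - c‖}

/-- `C` is the set of centers of a packing of unit balls, one of which is centered at the
origin. -/
def IsUnitBallPacking {d : ℕ} (C : Set (EuclideanSpace ℝ (Fin d))) : Prop :=
  (0 : EuclideanSpace ℝ (Fin d)) ∈ C ∧ ∀ c ∈ C, ∀ c' ∈ C, c ≠ c' → 2 ≤ ‖c - c'‖

/-- `F` is a (nonempty, exposed) face of `P` of dimension `k`. -/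
def IsFaceDim {d : ℕ} (P F : Set (EuclideanSpace ℝ (Fin d))) (k : ℕ) : Prop :=
  IsExposed ℝ P F ∧ F.Nonempty ∧ Module.finrank ℝ (affineSpan ℝ F).direction = k

/-- `R(F)`: the distance from the origin to the affine hull of `F`. -/
def faceDist {d : ℕ} (F : Set (EuclideanSpace ℝ (Fin d))) : ℝ :=
  Metric.infDist 0 (affineSpan ℝ F : Set (EuclideanSpace ℝ (Fin d)))


/-!
Fix a face `F` with `R(F) < √2` and let `q` be the orthogonal projection of `o` onto `aff F`.
Let `A` be the set of centers whose bisectors with `o` pass through a relative interior point `z`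
of `F` (`o` among them). These bisectors contain `aff F`, and near `z` the cell is cut out by
their half-spaces alone, so every vector orthogonal to `A` is a direction of `aff F`. Hence `q`
lies in the span, which is the affine hull, of `A`, at distance `R(F)` from each point of `A`.
As the centers are `2` apart and `R(F) < √2`, the vectors from `q` to the points of `A` are
pairwise obtuse; a further center at distance `≤ R(F)` from `q` would put them all in an open
half-space, making them linearly independent, which contradicts the affine dependence. So
`q ∈ P`, no other bisector passes through `q`, and `q` is in the relative interior of `F`; being
the point of `F` nearest to `o`, `r_j = q`. Orthogonality follows from `r_k ∈ F_k ⊆ aff F_j`,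
and linear independence from `r_j ≠ r_{j+1}`: a relative interior point of `F_j` cannot lie in
the smaller face `F_{j+1}`.
-/

open Filter Topology Set
open scoped RealInnerProductSpace

section Convex

theorem mem_intrinsicInterior_iff_mem_nhdsWithin {𝕜 V P : Type*} [Ring 𝕜] [AddCommGroup V]
    [Module 𝕜 V] [TopologicalSpace P] [AddTorsor V P] {s : Set P} {x : P} :
    x ∈ intrinsicInterior 𝕜 s ↔ x ∈ affineSpan 𝕜 s ∧ s ∈ 𝓝[affineSpan 𝕜 s] x := by
  have key (y : affineSpan 𝕜 s) : (↑) ⁻¹' s ∈ 𝓝 y ↔ s ∈ 𝓝[affineSpan 𝕜 s] (y : P) := by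
    rw [mem_nhds_subtype_iff_nhdsWithin]
    erw [Subtype.image_preimage_coe]
    rw [inter_mem_iff, and_iff_right self_mem_nhdsWithin]
  simp only [mem_intrinsicInterior, mem_interior_iff_mem_nhds, key]
  exact ⟨fun ⟨y, hy, hyx⟩ => hyx ▸ ⟨y.2, hy⟩, fun ⟨hx, hs⟩ => ⟨⟨x, hx⟩, hs, rfl⟩⟩

variable {E : Type*} [AddCommGroup E] [Module ℝ E] [TopologicalSpace E]

theorem exists_pos_add_smul_sub_mem_of_mem_intrinsicInterior [IsTopologicalAddGroup E]
    [ContinuousSMul ℝ E] {s : Set E} {y z : E} (hz : z ∈ intrinsicInterior ℝ s) (hy : y ∈ s) :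
    ∃ t : ℝ, 0 < t ∧ z + t • (z - y) ∈ s := by
  obtain ⟨hz, hs⟩ := mem_intrinsicInterior_iff_mem_nhdsWithin.1 hz
  have hline : Tendsto (fun t : ℝ => z + t • (z - y)) (𝓝[>] 0) (𝓝[affineSpan ℝ s] z) := by
    refine tendsto_nhdsWithin_iff.2 ⟨?_, .of_forall fun t => ?_⟩
    · exact tendsto_nhdsWithin_of_tendsto_nhds (Continuous.tendsto' (by fun_prop) _ _ (by simp))
    · have := AffineSubspace.vadd_mem_of_mem_direction (Submodule.smul_mem _ t
        (AffineSubspace.vsub_mem_direction hz (subset_affineSpan ℝ s hy))) hz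
      rwa [vadd_eq_add, vsub_eq_sub, add_comm] at this
  obtain ⟨t, hts, ht⟩ := ((hline.eventually hs).and self_mem_nhdsWithin).exists
  exact ⟨t, ht, hts⟩

theorem IsExtreme.subset_of_mem_intrinsicInterior [IsTopologicalAddGroup E]
    [ContinuousSMul ℝ E] {A B C : Set E} {z : E} (hB : IsExtreme ℝ A B) (hCA : C ⊆ A)
    (hz : z ∈ intrinsicInterior ℝ C) (hzB : z ∈ B) : C ⊆ B := by
  intro y hy
  obtain ⟨t, ht, hyt⟩ := exists_pos_add_smul_sub_mem_of_mem_intrinsicInterior hz hy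
  refine hB.left_mem_of_mem_openSegment (hCA hy) (hCA hyt) hzB
    ⟨t / (1 + t), 1 / (1 + t), by positivity, by positivity, by field_simp; ring, ?_⟩
  match_scalars <;> field_simp; ring

theorem IsExtreme.notMem_of_mem_intrinsicInterior [IsTopologicalAddGroup E]
    [ContinuousSMul ℝ E] {A B C : Set E} {x : E} (hB : IsExtreme ℝ A B) (hCA : C ⊆ A)
    (hBC : B ⊂ C) (hx : x ∈ intrinsicInterior ℝ C) : x ∉ B :=
  fun hxB => hBC.2 (hB.subset_of_mem_intrinsicInterior hCA hx hxB)

theorem IsExposed.inter_affineSpan_subset {A B : Set E} (hB : IsExposed ℝ A B) :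
    A ∩ affineSpan ℝ B ⊆ B := by
  rintro x ⟨hxA, hxB⟩
  obtain rfl | hne := B.eq_empty_or_nonempty
  · simp at hxB
  obtain ⟨l, rfl⟩ := hB hne
  obtain ⟨w, hw⟩ := hne
  have hlevel : affineSpan ℝ {x ∈ A | ∀ y ∈ A, l y ≤ l x} ≤
      AffineSubspace.mk' w (LinearMap.ker l.toLinearMap) :=
    affineSpan_le.2 fun b hb => by
      simp [AffineSubspace.mem_mk', le_antisymm (hw.2 b hb.1) (hb.2 w hw.1)]
  have hlx : l x = l w := by
    simpa [AffineSubspace.mem_mk', sub_eq_zero] using hlevel hxB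
  exact ⟨hxA, fun y hy => hlx ▸ hw.2 y hy⟩

end Convex

section InnerProduct

variable {V : Type*} [NormedAddCommGroup V] [InnerProductSpace ℝ V]

theorem norm_le_norm_sub_iff_inner_le (x c : V) :
    ‖x‖ ≤ ‖x - c‖ ↔ ⟪c, x⟫ ≤ ‖c‖ ^ 2 / 2 := by
  rw [← sq_le_sq₀ (norm_nonneg _) (norm_nonneg _), norm_sub_sq_real, real_inner_comm]
  constructor <;> intro h <;> linarith

theorem mem_perpBisector_zero_iff_inner_eq (x c : V) :
    x ∈ AffineSubspace.perpBisector 0 c ↔ ⟪c, x⟫ = ‖c‖ ^ 2 / 2 := by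
  simp [AffineSubspace.mem_perpBisector_iff_inner_eq, real_inner_comm]

theorem mem_perpBisector_zero_iff_norm_eq (x c : V) :
    x ∈ AffineSubspace.perpBisector 0 c ↔ ‖x‖ = ‖x - c‖ := by
  rw [AffineSubspace.mem_perpBisector_iff_dist_eq, dist_zero_right, dist_eq_norm]

theorem linearIndependent_of_pairwise_inner_nonpos {ι : Type*} {v : ι → V} (u : V)
    (hu : ∀ i, 0 < ⟪u, v i⟫) (hv : Pairwise fun i j => ⟪v i, v j⟫ ≤ 0) :
    LinearIndependent ℝ v := by
  classical
  -- The parts `W` of a vanishing combination with positive and with nonpositive coefficients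
  -- cancel, so `⟪W, W⟫ ≤ 0`; pairing `W = 0` with `u` then rules out positive coefficients.
  have nonpos : ∀ (s : Finset ι) (g : ι → ℝ), ∑ i ∈ s, g i • v i = 0 → ∀ i ∈ s, g i ≤ 0 := by
    intro s g hg
    set W := ∑ i ∈ s with 0 < g i, g i • v i
    have hW : W = -∑ i ∈ s with ¬0 < g i, g i • v i :=
      eq_neg_of_add_eq_zero_left ((Finset.sum_filter_add_sum_filter_not _ _ _).trans hg)
    have hWW : ⟪W, W⟫ ≤ 0 := by
      nth_rw 2 [hW]
      simp only [W, inner_neg_right, sum_inner, inner_sum, real_inner_smul_left,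
        real_inner_smul_right, neg_nonpos]
      refine Finset.sum_nonneg fun i hi => Finset.sum_nonneg fun j hj => ?_
      rw [Finset.mem_filter] at hi hj
      exact mul_nonneg_of_nonpos_of_nonpos (not_lt.1 hi.2)
        (mul_nonpos_of_nonneg_of_nonpos hj.2.le (hv fun hji => hi.2 (hji ▸ hj.2)))
    have hW0 : W = 0 := inner_self_eq_zero.1 (le_antisymm hWW real_inner_self_nonneg)
    intro i hi
    by_contra! hgi
    have : 0 < ⟪u, W⟫ := by
      rw [inner_sum]
      exact Finset.sum_pos (fun j hj => by
        rw [real_inner_smul_right]; exact mul_pos (Finset.mem_filter.1 hj).2 (hu j))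
        ⟨i, Finset.mem_filter.2 ⟨hi, hgi⟩⟩
    simp [hW0] at this
  refine linearIndependent_iff'.2 fun s g hg i hi => le_antisymm (nonpos s g hg i hi) ?_
  simpa using nonpos s (-g) (by simp [neg_smul, hg]) i hi

theorem lt_dist_of_mem_affineSpan {S : Set V} {q c : V} {ρ : ℝ}
    (hS : S.Pairwise (2 ≤ dist · ·)) (hcS : ∀ s ∈ S, 2 ≤ dist c s) (hq : q ∈ affineSpan ℝ S)
    (hSq : ∀ s ∈ S, dist s q = ρ) (hρ : ρ < √2) : ρ < dist c q := by
  by_contra! hcq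
  have hρ2 : ρ ^ 2 < 2 := (Real.lt_sqrt (dist_nonneg.trans hcq)).1 hρ
  have obtuse (a b : V) (ha : ‖a‖ ≤ ρ) (hb : ‖b‖ ≤ ρ) (hab : 2 ≤ ‖a - b‖) : ⟪a, b⟫ < 0 := by
    have := norm_sub_sq_real a b
    nlinarith [norm_nonneg a, norm_nonneg b, mul_self_le_mul_self (norm_nonneg a) ha,
      mul_self_le_mul_self (norm_nonneg b) hb]
  have hli : LinearIndependent ℝ fun s : S => (s : V) - q := by
    refine linearIndependent_of_pairwise_inner_nonpos (q - c) (fun s => ?_) fun s t hst => ?_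
    · rw [← neg_sub, inner_neg_left, neg_pos]
      refine obtuse _ _ (by rwa [← dist_eq_norm]) (by rw [← dist_eq_norm, hSq s s.2]) ?_
      rw [sub_sub_sub_cancel_right, ← dist_eq_norm]
      exact hcS s s.2
    · refine (obtuse _ _ (by rw [← dist_eq_norm, hSq s s.2])
        (by rw [← dist_eq_norm, hSq t t.2]) ?_).le
      rw [sub_sub_sub_cancel_right, ← dist_eq_norm]
      exact hS s.2 t.2 (Subtype.coe_ne_coe.2 hst)
  obtain ⟨t, w, hw, hqw⟩ :=
    eq_affineCombination_of_mem_affineSpan (p := ((↑) : S → V)) (by rwa [Subtype.range_coe])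
  rw [Finset.affineCombination_eq_linear_combination _ _ _ hw] at hqw
  have hsum : ∑ s ∈ t, w s • ((s : V) - q) = 0 := by
    simp [smul_sub, Finset.sum_sub_distrib, ← Finset.sum_smul, hw, ← hqw]
  simp [Finset.sum_eq_zero (linearIndependent_iff'.1 hli t w hsum)] at hw

theorem linearIndependent_of_inner_sub_eq_zero {r : ℕ → V} {n : ℕ} (h0 : r 0 = 0)
    (horth : ∀ j k, j < k → k ≤ n → ⟪r j, r k - r j⟫ = 0) (hne : ∀ j < n, r j ≠ r (j + 1)) :
    LinearIndependent ℝ fun j : Fin n => r (j + 1) := by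
  induction n with
  | zero => exact linearIndependent_empty_type
  | succ n ih =>
    have hsnoc : (fun j : Fin (n + 1) => r (j + 1)) =
        Fin.snoc (fun j : Fin n => r (j + 1)) (r (n + 1)) := by
      funext j
      refine Fin.lastCases ?_ (fun j => ?_) j <;> simp
    rw [hsnoc, linearIndependent_finSnoc]
    refine ⟨ih (fun j k hjk hk => horth j k hjk (by omega)) fun j hj => hne j (by omega),
      fun hmem => hne n n.lt_succ_self ?_⟩
    set W := Submodule.span ℝ (range fun j : Fin n => r (j + 1))
    have hrn : r n ∈ W := by
      cases n with
      | zero => simp [h0]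
      | succ m => exact Submodule.subset_span ⟨Fin.last m, rfl⟩
    have hWe : W ≤ (ℝ ∙ (r (n + 1) - r n))ᗮ := by
      refine Submodule.span_le.2 ?_
      rintro _ ⟨j, rfl⟩
      rw [SetLike.mem_coe, Submodule.mem_orthogonal_singleton_iff_inner_left]
      dsimp only
      rcases (show (j : ℕ) + 1 ≤ n from j.2).lt_or_eq with hj | hj
      · rw [← sub_sub_sub_cancel_right _ _ (r (j + 1)), inner_sub_right,
          horth _ _ (by omega) le_rfl, horth _ _ hj n.le_succ, sub_zero]
      · rw [hj]
        exact horth n (n + 1) n.lt_succ_self le_rfl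
    have hee := Submodule.mem_orthogonal_singleton_iff_inner_right.1 (hWe (W.sub_mem hmem hrn))
    exact (sub_eq_zero.1 (inner_self_eq_zero.1 hee)).symm

end InnerProduct

theorem finite_inter_closedBall_of_pairwise_le_dist {X : Type*} [MetricSpace X] [ProperSpace X]
    {s : Set X} {ε : ℝ} (hε : 0 < ε) (hs : s.Pairwise (ε ≤ dist · ·)) (x : X) (R : ℝ) :
    (s ∩ closedBall x R).Finite := by
  refine ((isCompact_closedBall x R).inter_left (isClosed_of_pairwise_le_dist hε hs)).finite ⟨?_⟩
  exact DiscreteTopology.of_forall_le_dist hε fun a b hab =>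
    hs a.2.1 b.2.1 (Subtype.coe_ne_coe.2 hab)

section Voronoi

variable {d : ℕ} {C F : Set (EuclideanSpace ℝ (Fin d))}

theorem IsUnitBallPacking.pairwise_le_dist (hC : IsUnitBallPacking C) :
    C.Pairwise (2 ≤ dist · ·) := fun c hc c' hc' hcc' => by
  simpa [dist_eq_norm] using hC.2 c hc c' hc' hcc'

/-- For `x` in the cell, the centers nearest to `x` (`o` among them). -/
def activeCenters (C : Set (EuclideanSpace ℝ (Fin d))) (x : EuclideanSpace ℝ (Fin d)) :
    Set (EuclideanSpace ℝ (Fin d)) :=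
  {c ∈ C | x ∈ AffineSubspace.perpBisector 0 c}

theorem convex_voronoiCell : Convex ℝ (VoronoiCell C) := by
  have : VoronoiCell C = ⋂ c ∈ C, {x | ⟪c, x⟫ ≤ ‖c‖ ^ 2 / 2} := by
    ext x
    simp [VoronoiCell, norm_le_norm_sub_iff_inner_le]
  rw [this]
  exact convex_iInter₂ fun c _ => convex_halfSpace_le (innerSL ℝ c).isLinear _

theorem isExposed_inter_perpBisector {c : EuclideanSpace ℝ (Fin d)} (hc : c ∈ C) :
    IsExposed ℝ (VoronoiCell C) (VoronoiCell C ∩ AffineSubspace.perpBisector 0 c) := by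
  rintro ⟨w, hwP, hw⟩
  have hle (y) (hy : y ∈ VoronoiCell C) : ⟪c, y⟫ ≤ ‖c‖ ^ 2 / 2 :=
    (norm_le_norm_sub_iff_inner_le y c).1 (hy c hc)
  refine ⟨innerSL ℝ c, Set.ext fun x => ?_⟩
  simp only [mem_inter_iff, SetLike.mem_coe, mem_perpBisector_zero_iff_inner_eq,
    innerSL_apply_apply, mem_ofPred_eq] at hw ⊢
  exact ⟨fun ⟨hx, hxc⟩ => ⟨hx, fun y hy => hxc ▸ hle y hy⟩,
    fun ⟨hx, hmax⟩ => ⟨hx, le_antisymm (hle x hx) (hw ▸ hmax w hwP)⟩⟩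

theorem eventually_mem_voronoiCell (hC : IsUnitBallPacking C) {x : EuclideanSpace ℝ (Fin d)}
    (hx : x ∈ VoronoiCell C) :
    ∀ᶠ y in 𝓝 x, (∀ c ∈ activeCenters C x, y ∈ AffineSubspace.perpBisector 0 c) →
      y ∈ VoronoiCell C := by
  -- Centers beyond `R` are irrelevant near `x`; the finitely many others are active or slack
  -- at `x`.
  set R := 2 * ‖x‖ + 2
  have hnear : ∀ c ∈ C ∩ closedBall 0 R, ∀ᶠ y in 𝓝 x, c ∉ activeCenters C x → ‖y‖ < ‖y - c‖ := by
    intro c hc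
    by_cases hca : c ∈ activeCenters C x
    · exact .of_forall fun _ h => absurd hca h
    have hlt : ‖x‖ < ‖x - c‖ :=
      (hx c hc.1).lt_of_ne fun h => hca ⟨hc.1, (mem_perpBisector_zero_iff_norm_eq x c).2 h⟩
    filter_upwards [(continuous_norm.tendsto x).eventually_lt
      ((continuous_id.sub continuous_const).norm.tendsto x) hlt] with y hy _ using hy
  filter_upwards [((finite_inter_closedBall_of_pairwise_le_dist two_pos hC.pairwise_le_dist
      0 R).eventually_all).2 hnear,
    (continuous_norm.tendsto x).eventually_lt_const (lt_add_one ‖x‖)] with y hnear hy hact c hc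
  by_cases hca : c ∈ activeCenters C x
  · exact ((mem_perpBisector_zero_iff_norm_eq y c).1 (hact c hca)).le
  by_cases hcR : ‖c‖ ≤ R
  · exact (hnear c ⟨hc, mem_closedBall_zero_iff.2 hcR⟩ hca).le
  · have := norm_sub_norm_le c y
    rw [norm_sub_rev] at this
    linarith

theorem affineSpan_le_perpBisector_of_mem_activeCenters (hFP : F ⊆ VoronoiCell C)
    {z c : EuclideanSpace ℝ (Fin d)} (hz : z ∈ intrinsicInterior ℝ F)
    (hc : c ∈ activeCenters C z) : affineSpan ℝ F ≤ AffineSubspace.perpBisector 0 c :=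
  affineSpan_le.2 fun _ hy =>
    ((isExposed_inter_perpBisector hc.1).isExtreme.subset_of_mem_intrinsicInterior hFP hz
      ⟨hFP (intrinsicInterior_subset hz), hc.2⟩ hy).2

theorem orthogonal_span_activeCenters_le_direction (hC : IsUnitBallPacking C)
    (hF : IsExposed ℝ (VoronoiCell C) F) {z : EuclideanSpace ℝ (Fin d)} (hz : z ∈ F) :
    (Submodule.span ℝ (activeCenters C z))ᗮ ≤ (affineSpan ℝ F).direction := by
  intro v hv
  have hline (t : ℝ) : ∀ c ∈ activeCenters C z, z + t • v ∈ AffineSubspace.perpBisector 0 c := by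
    intro c hc
    have htv : t • v ∈ (AffineSubspace.perpBisector 0 c).direction := by
      rw [AffineSubspace.direction_perpBisector, vsub_eq_sub, sub_zero]
      exact Submodule.smul_mem _ t (Submodule.orthogonal_le
        (Submodule.span_singleton_le_iff_mem _ _ |>.2 (Submodule.subset_span hc)) hv)
    simpa [add_comm] using AffineSubspace.vadd_mem_of_mem_direction htv hc.2
  have hP : ∀ᶠ t in 𝓝 (0 : ℝ), z + t • v ∈ VoronoiCell C :=
    (Continuous.tendsto' (by fun_prop) 0 z (by simp)).eventually
      (eventually_mem_voronoiCell hC (hF.subset hz)) |>.mono fun t ht => ht (hline t)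
  have hPsymm : ∀ᶠ t in 𝓝 (0 : ℝ), z + t • v ∈ VoronoiCell C ∧ z + (-t) • v ∈ VoronoiCell C :=
    hP.and (Continuous.tendsto' continuous_neg 0 0 neg_zero |>.eventually hP)
  obtain ⟨t, ⟨hplus, hminus⟩, ht⟩ :=
    ((hPsymm.filter_mono (nhdsWithin_le_nhds (s := Ioi 0))).and self_mem_nhdsWithin).exists
  have hzt : z + t • v ∈ F := hF.isExtreme.left_mem_of_mem_openSegment hplus hminus hz
    ⟨1 / 2, 1 / 2, by norm_num, by norm_num, by norm_num, by module⟩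
  have := AffineSubspace.vsub_mem_direction (subset_affineSpan ℝ F hzt) (subset_affineSpan ℝ F hz)
  rw [vsub_eq_sub, add_sub_cancel_left] at this
  exact (Submodule.smul_mem_iff _ (ne_of_gt ht)).1 this

theorem zero_notMem_of_finrank_lt (hC : IsUnitBallPacking C)
    (hF : IsExposed ℝ (VoronoiCell C) F) (hdim : Module.finrank ℝ (affineSpan ℝ F).direction < d) :
    (0 : EuclideanSpace ℝ (Fin d)) ∉ F := by
  intro h0
  have hspan : Submodule.span ℝ (activeCenters C 0) = ⊥ :=
    Submodule.span_eq_bot.2 fun c hc => (AffineSubspace.left_mem_perpBisector.1 hc.2).symm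
  have := orthogonal_span_activeCenters_le_direction hC hF h0
  rw [hspan, Submodule.bot_orthogonal_eq_top, top_le_iff] at this
  rw [this, finrank_top, finrank_euclideanSpace_fin] at hdim
  exact lt_irrefl d hdim

theorem mem_intrinsicInterior_of_activeCenters (hC : IsUnitBallPacking C)
    (hF : IsExposed ℝ (VoronoiCell C) F) {q : EuclideanSpace ℝ (Fin d)}
    (hq : q ∈ affineSpan ℝ F) (hqP : q ∈ VoronoiCell C)
    (hact : ∀ c ∈ activeCenters C q, affineSpan ℝ F ≤ AffineSubspace.perpBisector 0 c) :
    q ∈ intrinsicInterior ℝ F := by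
  refine mem_intrinsicInterior_iff_mem_nhdsWithin.2 ⟨hq, ?_⟩
  filter_upwards [nhdsWithin_le_nhds (eventually_mem_voronoiCell hC hqP), self_mem_nhdsWithin]
    with y hy hyF
  exact hF.inter_affineSpan_subset ⟨hy fun c hc => hact c hc hyF, hyF⟩

theorem faceDist_le_of_subset {G : Set (EuclideanSpace ℝ (Fin d))} (hGF : G ⊆ F)
    (hG : G.Nonempty) : faceDist F ≤ faceDist G :=
  infDist_le_infDist_of_subset (affineSpan_mono ℝ hGF) ((affineSpan_nonempty ℝ).2 hG)

theorem orthogonalProjection_zero_mem_intrinsicInterior (hC : IsUnitBallPacking C)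
    (hF : IsExposed ℝ (VoronoiCell C) F) [Nonempty (affineSpan ℝ F)] (hR : faceDist F < √2) :
    (EuclideanGeometry.orthogonalProjection (affineSpan ℝ F) 0 : EuclideanSpace ℝ (Fin d)) ∈
      intrinsicInterior ℝ F := by
  set q : EuclideanSpace ℝ (Fin d) := ↑(EuclideanGeometry.orthogonalProjection (affineSpan ℝ F) 0)
  have hqF : q ∈ affineSpan ℝ F := EuclideanGeometry.orthogonalProjection_mem 0
  obtain ⟨z, hz⟩ :=
    ((affineSpan_nonempty ℝ).1 ⟨q, hqF⟩).intrinsicInterior (hF.convex convex_voronoiCell)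
  set A := activeCenters C z
  have hFA (c) (hc : c ∈ A) : affineSpan ℝ F ≤ AffineSubspace.perpBisector 0 c :=
    affineSpan_le_perpBisector_of_mem_activeCenters hF.subset hz hc
  have hdist (s) (hs : s ∈ A) : dist s q = ‖q‖ := by
    rw [dist_eq_norm, norm_sub_rev, ← (mem_perpBisector_zero_iff_norm_eq _ _).1 (hFA s hs hqF)]
  have hqA : q ∈ affineSpan ℝ A := by
    have h0 : (0 : EuclideanSpace ℝ (Fin d)) ∈ A :=
      ⟨hC.1, (mem_perpBisector_zero_iff_norm_eq z 0).2 (by rw [sub_zero])⟩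
    have hperp := Submodule.orthogonal_le
      (orthogonal_span_activeCenters_le_direction hC hF (intrinsicInterior_subset hz))
      (EuclideanGeometry.vsub_orthogonalProjection_mem_direction_orthogonal (affineSpan ℝ F) 0)
    rw [Submodule.orthogonal_orthogonal, vsub_eq_sub, zero_sub, neg_mem_iff] at hperp
    rwa [← SetLike.mem_coe, ← Set.insert_eq_of_mem h0, affineSpan_insert_zero]
  have hqR : ‖q‖ < √2 := by
    rwa [← dist_zero_left, EuclideanGeometry.dist_orthogonalProjection_eq_infDist]
  have hfar (c) (hc : c ∈ C) (hcA : c ∉ A) : ‖q‖ < ‖q - c‖ := by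
    rw [norm_sub_rev, ← dist_eq_norm]
    exact lt_dist_of_mem_affineSpan (hC.pairwise_le_dist.mono fun _ hs => hs.1)
      (fun s hs => hC.pairwise_le_dist hc hs.1 fun h => hcA (h ▸ hs)) hqA hdist hqR
  have hqP : q ∈ VoronoiCell C := fun c hc => by
    by_cases hcA : c ∈ A
    · exact ((mem_perpBisector_zero_iff_norm_eq _ _).1 (hFA c hcA hqF)).le
    · exact (hfar c hc hcA).le
  refine mem_intrinsicInterior_of_activeCenters hC hF hqF hqP fun c hc => hFA c ?_
  by_contra hcA
  exact (hfar c hc.1 hcA).ne ((mem_perpBisector_zero_iff_norm_eq _ _).1 hc.2)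

theorem mem_intrinsicInterior_and_orthogonal_of_forall_norm_le (hC : IsUnitBallPacking C)
    (hF : IsExposed ℝ (VoronoiCell C) F) (hR : faceDist F < √2) {r : EuclideanSpace ℝ (Fin d)}
    (hr : r ∈ F) (hmin : ∀ z ∈ F, ‖r‖ ≤ ‖z‖) :
    r ∈ intrinsicInterior ℝ F ∧
      ∀ x ∈ affineSpan ℝ F, ⟪r, x - r⟫ = 0 ∧ dist 0 r ≤ dist 0 x := by
  have hr' := subset_affineSpan ℝ F hr
  have : Nonempty (affineSpan ℝ F) := ⟨⟨r, hr'⟩⟩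
  have hq := orthogonalProjection_zero_mem_intrinsicInterior hC hF hR
  have hinf (x) (hx : x ∈ affineSpan ℝ F) :
      dist 0 (↑(EuclideanGeometry.orthogonalProjection (affineSpan ℝ F) 0) :
        EuclideanSpace ℝ (Fin d)) ≤ dist 0 x := by
    rw [EuclideanGeometry.dist_orthogonalProjection_eq_infDist]
    exact infDist_le_dist_of_mem hx
  obtain rfl : (↑(EuclideanGeometry.orthogonalProjection (affineSpan ℝ F) 0) :
      EuclideanSpace ℝ (Fin d)) = r :=
    (EuclideanGeometry.dist_orthogonalProjection_eq_dist_iff_eq_of_mem hr').1 <|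
      (hinf r hr').antisymm (by simpa using hmin _ (intrinsicInterior_subset hq))
  refine ⟨hq, fun x hx => ⟨?_, hinf x hx⟩⟩
  have := Submodule.inner_right_of_mem_orthogonal
    (AffineSubspace.vsub_mem_direction hx (EuclideanGeometry.orthogonalProjection_mem 0))
    (EuclideanGeometry.vsub_orthogonalProjection_mem_direction_orthogonal (affineSpan ℝ F) 0)
  rw [vsub_eq_sub, vsub_eq_sub, zero_sub, inner_neg_right, neg_eq_zero, real_inner_comm] at this
  exact this

end Voronoi

theorem rogers_simplex_is_orthoscheme_general (d i : ℕ) (hid : i ≤ d)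
    (C : Set (EuclideanSpace ℝ (Fin d))) (hC : IsUnitBallPacking C)
    (F : ℕ → Set (EuclideanSpace ℝ (Fin d)))
    (hface : ∀ j, 1 ≤ j → j ≤ i → IsFaceDim (VoronoiCell C) (F j) (d - j))
    (hnest : ∀ j, 1 ≤ j → j < i → F (j + 1) ⊆ F j)
    (hR : faceDist (F i) < Real.sqrt 2)
    (r : ℕ → EuclideanSpace ℝ (Fin d)) (hr0 : r 0 = 0)
    (hr : ∀ j, 1 ≤ j → j ≤ i → r j ∈ F j ∧ ∀ z ∈ F j, ‖r j‖ ≤ ‖z‖) :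
    LinearIndependent ℝ (fun j : Fin i => r ((j : ℕ) + 1)) ∧
      (∀ j k : ℕ, j < k → k ≤ i → (inner ℝ (r j) (r k - r j) : ℝ) = 0) ∧
      ∀ j, 1 ≤ j → j ≤ i →
        r j ∈ intrinsicInterior ℝ (F j) ∧
          ∀ q ∈ (affineSpan ℝ (F j) : Set (EuclideanSpace ℝ (Fin d))),
            dist (0 : EuclideanSpace ℝ (Fin d)) (r j) ≤ dist 0 q := by
  have hanti (j k : ℕ) (hj : 1 ≤ j) (hjk : j ≤ k) : k ≤ i → F k ⊆ F j := by
    induction k, hjk using Nat.le_induction with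
    | base => exact fun _ => subset_rfl
    | succ k hjk ih => exact fun hki => (hnest k (hj.trans hjk) hki).trans (ih (by omega))
  have hfoot (j : ℕ) (hj : 1 ≤ j) (hji : j ≤ i) :=
    have hRj := (faceDist_le_of_subset (hanti j i hj hji le_rfl)
      (hface i (hj.trans hji) le_rfl).2.1).trans_lt hR
    mem_intrinsicInterior_and_orthogonal_of_forall_norm_le hC (hface j hj hji).1 hRj
      (hr j hj hji).1 (hr j hj hji).2
  have horth (j k : ℕ) (hjk : j < k) (hki : k ≤ i) : ⟪r j, r k - r j⟫ = 0 := by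
    rcases Nat.eq_zero_or_pos j with rfl | hj
    · rw [hr0, inner_zero_left]
    · exact ((hfoot j hj (by omega)).2 _ (subset_affineSpan ℝ _
        (hanti j k hj hjk.le hki (hr k (by omega) hki).1))).1
  have hssub (j : ℕ) (hj : 1 ≤ j) (hji : j < i) : F (j + 1) ⊂ F j := by
    refine ⟨hnest j hj hji, fun hsub => ?_⟩
    have hdim := (hface j hj hji.le).2.2
    rw [← (hnest j hj hji).antisymm hsub, (hface (j + 1) (by omega) hji).2.2] at hdim
    omega
  refine ⟨linearIndependent_of_inner_sub_eq_zero hr0 horth fun j hj h => ?_, horth,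
    fun j hj hji => ⟨(hfoot j hj hji).1, fun x hx => ((hfoot j hj hji).2 x hx).2⟩⟩
  rcases Nat.eq_zero_or_pos j with rfl | hj0
  · have hF1 := hface 1 le_rfl hj
    rw [hr0] at h
    exact zero_notMem_of_finrank_lt hC hF1.1 (by rw [hF1.2.2]; omega) (h ▸ (hr 1 le_rfl hj).1)
  · exact (hface (j + 1) (by omega) hj).1.isExtreme.notMem_of_mem_intrinsicInterior
      (hface j hj0 hj.le).1.subset (hssub j hj0 hj) (hfoot j hj0 hj.le).1
      (h ▸ (hr (j + 1) (by omega) hj).1)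

/-- **Lemma 3 (Bezdek).** Let `F (d-i) ⊂ ⋯ ⊂ F (d-1)` be a subflag of faces of a bounded
Voronoi cell `P` in a unit ball packing of `ℝ^d` (here `F j` has dimension `d - j` for
`1 ≤ j ≤ i`, indexed by codimension) with `R(F_{d-i}) < √2`, and for `1 ≤ j ≤ i` let
`r j` be the point of the face of dimension `d - j` nearest to `o` (with `r 0 = o = 0`).
Then `r 1, …, r i` are linearly independent, `conv {o, r 1, …, r i}` is an `i`-dimensional
orthoscheme, and each `r j` lies in the relative interior of its face and is the orthogonal
projection of `o` onto the affine hull of that face. -/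
theorem rogers_simplex_is_orthoscheme (d i : ℕ) (hi : 1 ≤ i) (hid : i ≤ d)
    (C : Set (EuclideanSpace ℝ (Fin d))) (hC : IsUnitBallPacking C)
    (hBdd : Bornology.IsBounded (VoronoiCell C))
    (F : ℕ → Set (EuclideanSpace ℝ (Fin d)))
    (hface : ∀ j, 1 ≤ j → j ≤ i → IsFaceDim (VoronoiCell C) (F j) (d - j))
    (hnest : ∀ j, 1 ≤ j → j < i → F (j + 1) ⊆ F j)
    (hR : faceDist (F i) < Real.sqrt 2)
    (r : ℕ → EuclideanSpace ℝ (Fin d)) (hr0 : r 0 = 0)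
    (hr : ∀ j, 1 ≤ j → j ≤ i → r j ∈ F j ∧ ∀ z ∈ F j, ‖r j‖ ≤ ‖z‖) :
    LinearIndependent ℝ (fun j : Fin i => r ((j : ℕ) + 1)) ∧
      (∀ j k : ℕ, j < k → k ≤ i → (inner ℝ (r j) (r k - r j) : ℝ) = 0) ∧
      ∀ j, 1 ≤ j → j ≤ i →
        r j ∈ intrinsicInterior ℝ (F j) ∧
          ∀ q ∈ (affineSpan ℝ (F j) : Set (EuclideanSpace ℝ (Fin d))),
            dist (0 : EuclideanSpace ℝ (Fin d)) (r j) ≤ dist 0 q :=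
  rogers_simplex_is_orthoscheme_general d i hid C hC F hface hnest hR r hr0 hr
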